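/- Let AF = ⟨𝒜, ⇀⟩ be an argumentation framework and let agents 1,…,n submit a profile P = (ℒ₁,…,ℒₙ) of complete labelings, where ℒᵢ is agent i's most preferred labeling. Suppose each agent i's preference relation ⪰ᵢ is one of the eight relations ⪰_{i,⊖}, ⪰_{i,⊖_W}, ⪰_{i,⊖ᴹ}, ⪰_{i,⊖_Wᴹ}, ⪰_{i,|⊖|}, ⪰_{i,|⊖_W|}, ⪰_{i,|⊖ᴹ|}, ⪰_{i,|⊖_Wᴹ|} with respect to ℒᵢ (different agents may use different relations), and suppose the skeptical outcome ℒ_SO = so(P) exists. Then no admissible labeling ℒ with ℒ ⊑ ℒᵢ for every agent i Pareto dominates ℒ_SO with respect to the preference profile (⪰ᵢ); i.e., ℒ_SO is Pareto optimal in the set of all admissible labelings that are ⊑ every ℒᵢ. -/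
import Mathlib


/- Labels for arguments: in, out, undec -/
inductive Lab where
  | IN : Lab
  | OUT : Lab
  | UNDEC : Lab
deriving DecidableEq

variable {A : Type}

/-- Arguments labeled `in` by a labeling. -/
def labIn (L : A → Lab) : Set A := {a | L a = Lab.IN}
/-- Arguments labeled `out` by a labeling. -/
def labOut (L : A → Lab) : Set A := {a | L a = Lab.OUT}
/-- Arguments labeled `undec` by a labeling. -/
def labUndec (L : A → Lab) : Set A := {a | L a = Lab.UNDEC}
/-- Decided arguments: labeled `in` or `out`. -/
def labDec (L : A → Lab) : Set A := labIn L ∪ labOut L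

/-- Admissible labeling with respect to a defeat relation `df` (`df b a` : b defeats a). -/
def Admissible (df : A → A → Prop) (L : A → Lab) : Prop :=
  ∀ a : A,
    (L a = Lab.IN → ∀ b : A, df b a → L b = Lab.OUT) ∧
    (L a = Lab.OUT → ∃ b : A, df b a ∧ L b = Lab.IN)

/-- Complete labeling. -/
def Complete (df : A → A → Prop) (L : A → Lab) : Prop :=
  Admissible df L ∧
  ∀ a : A, L a = Lab.UNDEC →
    ¬ (∀ b : A, df b a → L b = Lab.OUT) ∧ ¬ (∃ b : A, df b a ∧ L b = Lab.IN)

/-- `L1 ⊑ L2` : less or equally committed. -/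
def LabLeq (L1 L2 : A → Lab) : Prop := labIn L1 ⊆ labIn L2 ∧ labOut L1 ⊆ labOut L2

/-- `L1 ≈ L2` : compatible labelings. -/
def LabCompatible (L1 L2 : A → Lab) : Prop :=
  labIn L1 ∩ labOut L2 = ∅ ∧ labOut L1 ∩ labIn L2 = ∅

/-- Hamming set `L1 ⊖ L2`. -/
def hamSet (L1 L2 : A → Lab) : Set A := {a | L1 a ≠ L2 a}
/-- Hamming distance `L1 |⊖| L2`. -/
noncomputable def hamDist (L1 L2 : A → Lab) : ℕ := (hamSet L1 L2).ncard

/-- in–out Hamming set `L1 ⊖ⁱᵒ L2`. -/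
def ioSet (L1 L2 : A → Lab) : Set A :=
  {a | (L1 a = Lab.IN ∧ L2 a = Lab.OUT) ∨ (L1 a = Lab.OUT ∧ L2 a = Lab.IN)}
/-- dec–undec Hamming set `L1 ⊖ᵈᵘ L2`. -/
def duSet (L1 L2 : A → Lab) : Set A :=
  {a | (a ∈ labDec L1 ∧ L2 a = Lab.UNDEC) ∨ (L1 a = Lab.UNDEC ∧ a ∈ labDec L2)}
/-- IUO Hamming sets `L1 ⊖ᴹ L2` as a pair. -/
def iuoSets (L1 L2 : A → Lab) : Set A × Set A := (ioSet L1 L2, duSet L1 L2)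
/-- Componentwise inclusion on pairs of sets. -/
def PairSub {α : Type} (p q : Set α × Set α) : Prop := p.1 ⊆ q.1 ∧ p.2 ⊆ q.2
/-- IUO Hamming distance `L1 |⊖ᴹ| L2`. -/
noncomputable def iuoDist (L1 L2 : A → Lab) : ℕ :=
  2 * (ioSet L1 L2).ncard + (duSet L1 L2).ncard

/-- Two arguments are in-sync (with respect to the complete labelings of the framework). -/
def InSync (df : A → A → Prop) (a b : A) : Prop :=
  (∀ L : A → Lab, Complete df L → L a = L b) ∨
  (∀ L : A → Lab, Complete df L →
    (L a = Lab.IN ↔ L b = Lab.OUT) ∧ (L a = Lab.OUT ↔ L b = Lab.IN))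

/-- An issue: an equivalence class of the in-sync relation. -/
def IsIssue (df : A → A → Prop) (B : Set A) : Prop :=
  ∃ a : A, B = {b | InSync df a b}

/-- Issue-wise set `L1 ⊖_W L2`. -/
def iwSet (df : A → A → Prop) (L1 L2 : A → Lab) : Set (Set A) :=
  {B | IsIssue df B ∧ ∃ a ∈ B, L1 a ≠ L2 a}
/-- Issue-wise distance `L1 |⊖_W| L2`. -/
noncomputable def iwDist (df : A → A → Prop) (L1 L2 : A → Lab) : ℕ := (iwSet df L1 L2).ncard

/-- in–out Issue-wise set `L1 ⊖_Wⁱᵒ L2`. -/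
def iwIoSet (df : A → A → Prop) (L1 L2 : A → Lab) : Set (Set A) :=
  {B | IsIssue df B ∧ ∃ a ∈ B, a ∈ ioSet L1 L2}
/-- dec–undec Issue-wise set `L1 ⊖_Wᵈᵘ L2`. -/
def iwDuSet (df : A → A → Prop) (L1 L2 : A → Lab) : Set (Set A) :=
  {B | IsIssue df B ∧ ∃ a ∈ B, a ∈ duSet L1 L2}
/-- IUO Issue-wise sets `L1 ⊖_Wᴹ L2` as a pair. -/
def iwIuoSets (df : A → A → Prop) (L1 L2 : A → Lab) : Set (Set A) × Set (Set A) :=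
  (iwIoSet df L1 L2, iwDuSet df L1 L2)
/-- IUO Issue-wise distance `L1 |⊖_Wᴹ| L2`. -/
noncomputable def iwIuoDist (df : A → A → Prop) (L1 L2 : A → Lab) : ℕ :=
  2 * (iwIoSet df L1 L2).ncard + (iwDuSet df L1 L2).ncard

/- Preferences: `pref Li L L'` means `L ⪰ L'` for an agent whose most preferred labeling is `Li`. -/
/-- Hamming set based preference `⪰_{i,⊖}`. -/
def hamSetPref (Li L L' : A → Lab) : Prop := hamSet L Li ⊆ hamSet L' Li
/-- Hamming distance based preference `⪰_{i,|⊖|}`. -/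
def hamDistPref (Li L L' : A → Lab) : Prop := hamDist L Li ≤ hamDist L' Li
/-- IUO Hamming sets based preference `⪰_{i,⊖ᴹ}`. -/
def iuoSetPref (Li L L' : A → Lab) : Prop := PairSub (iuoSets L Li) (iuoSets L' Li)
/-- IUO Hamming distance based preference `⪰_{i,|⊖ᴹ|}`. -/
def iuoDistPref (Li L L' : A → Lab) : Prop := iuoDist L Li ≤ iuoDist L' Li
/-- Issue-wise set based preference `⪰_{i,⊖_W}`. -/
def iwSetPref (df : A → A → Prop) (Li L L' : A → Lab) : Prop := iwSet df L Li ⊆ iwSet df L' Li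
/-- Issue-wise distance based preference `⪰_{i,|⊖_W|}`. -/
def iwDistPref (df : A → A → Prop) (Li L L' : A → Lab) : Prop := iwDist df L Li ≤ iwDist df L' Li
/-- IUO Issue-wise sets based preference `⪰_{i,⊖_Wᴹ}`. -/
def iwIuoSetPref (df : A → A → Prop) (Li L L' : A → Lab) : Prop :=
  PairSub (iwIuoSets df L Li) (iwIuoSets df L' Li)
/-- IUO Issue-wise distance based preference `⪰_{i,|⊖_Wᴹ|}`. -/
def iwIuoDistPref (df : A → A → Prop) (Li L L' : A → Lab) : Prop :=
  iwIuoDist df L Li ≤ iwIuoDist df L' Li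

/-- Strict part of a preference relation. -/
def StrictPref (pref : (A → Lab) → (A → Lab) → Prop) (L L' : A → Lab) : Prop :=
  pref L L' ∧ ¬ pref L' L

/-- `L'` Pareto dominates `L` with respect to the profile of preference relations `pref`. -/
def Dominates {ι : Type} (pref : ι → (A → Lab) → (A → Lab) → Prop) (L' L : A → Lab) : Prop :=
  (∀ i : ι, pref i L' L) ∧ ∃ j : ι, StrictPref (pref j) L' L

/-- `L` is Pareto optimal in `S`: no element of `S` Pareto dominates `L`. -/
def ParetoOptimalIn {ι : Type} (pref : ι → (A → Lab) → (A → Lab) → Prop)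
    (S : Set (A → Lab)) (L : A → Lab) : Prop :=
  ∀ L' ∈ S, ¬ Dominates pref L' L

/-- `LSO` is the skeptical outcome of profile `P`: the greatest admissible labeling below the
profile. -/
def IsSkeptical {n : ℕ} (df : A → A → Prop) (P : Fin n → (A → Lab)) (LSO : A → Lab) : Prop :=
  Admissible df LSO ∧ (∀ i : Fin n, LabLeq LSO (P i)) ∧
  ∀ L : A → Lab, Admissible df L → (∀ i : Fin n, LabLeq L (P i)) → LabLeq L LSO

/-- `LC` is the credulous initial outcome of the profile `P`. -/
def IsCio {n : ℕ} (P : Fin n → (A → Lab)) (LC : A → Lab) : Prop :=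
  ∀ a : A,
    (LC a = Lab.IN ↔ (∃ i : Fin n, P i a = Lab.IN) ∧ ∀ j : Fin n, P j a ≠ Lab.OUT) ∧
    (LC a = Lab.OUT ↔ (∃ i : Fin n, P i a = Lab.OUT) ∧ ∀ j : Fin n, P j a ≠ Lab.IN)

/-- `LCO` is the credulous outcome of `P`: the greatest admissible labeling `⊑ cio(P)`. -/
def IsCredulous {n : ℕ} (df : A → A → Prop) (P : Fin n → (A → Lab)) (LCO : A → Lab) : Prop :=
  ∃ LCIO : A → Lab, IsCio P LCIO ∧ Admissible df LCO ∧ LabLeq LCO LCIO ∧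
    ∀ L : A → Lab, Admissible df L → LabLeq L LCIO → LabLeq L LCO

/-- `LSCO` is the super credulous outcome of `P` given credulous outcome `LCO`:
the least complete labeling above `LCO`. -/
def IsSuperCredulousOf (df : A → A → Prop) (LCO LSCO : A → Lab) : Prop :=
  Complete df LSCO ∧ LabLeq LCO LSCO ∧
    ∀ L : A → Lab, Complete df L → LabLeq LCO L → LabLeq LSCO L

lemma labLeq_point {L1 L2 : A → Lab} (h : LabLeq L1 L2) (a : A) :
    L1 a = L2 a ∨ L1 a = Lab.UNDEC := by
  cases hv : L1 a with
  | IN => exact Or.inl (h.1 hv).symm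
  | OUT => exact Or.inl (h.2 hv).symm
  | UNDEC => exact Or.inr rfl

lemma labLeq_trans {L1 L2 L3 : A → Lab} (h : LabLeq L1 L2) (h' : LabLeq L2 L3) :
    LabLeq L1 L3 :=
  ⟨h.1.trans h'.1, h.2.trans h'.2⟩

lemma ham_sub {L' LSO Li : A → Lab} (h' : LabLeq L' LSO) (h : LabLeq LSO Li) :
    hamSet LSO Li ⊆ hamSet L' Li := by
  intro a ha
  have h1 : LSO a = Lab.UNDEC := (labLeq_point h a).resolve_left ha
  have h2 : L' a = Lab.UNDEC := by
    rcases labLeq_point h' a with h2 | h2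
    · rw [h2, h1]
    · exact h2
  intro hc
  exact ha (by rw [h1, ← h2, hc])

lemma io_empty {L Li : A → Lab} (h : LabLeq L Li) : ioSet L Li = ∅ := by
  ext a
  simp only [ioSet, Set.mem_setOf_eq, Set.mem_empty_iff_false, iff_false]
  rintro (⟨h1, h2⟩ | ⟨h1, h2⟩)
  · rw [h.1 h1] at h2; exact Lab.noConfusion h2
  · rw [h.2 h1] at h2; exact Lab.noConfusion h2

lemma du_sub {L' LSO Li : A → Lab} (h' : LabLeq L' LSO) (h : LabLeq LSO Li) :
    duSet LSO Li ⊆ duSet L' Li := by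
  intro a ha
  rcases ha with ⟨hd, hu⟩ | ⟨hu, hd⟩
  · exfalso
    rcases hd with h1 | h1
    · rw [h.1 h1] at hu; exact Lab.noConfusion hu
    · rw [h.2 h1] at hu; exact Lab.noConfusion hu
  · have h2 : L' a = Lab.UNDEC := by
      rcases labLeq_point h' a with h2 | h2
      · rw [h2, hu]
      · exact h2
    exact Or.inr ⟨h2, hd⟩

lemma iw_sub {df : A → A → Prop} {L' LSO Li : A → Lab} (h' : LabLeq L' LSO)
    (h : LabLeq LSO Li) : iwSet df LSO Li ⊆ iwSet df L' Li := by
  rintro B ⟨hB, a, haB, hne⟩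
  exact ⟨hB, a, haB, ham_sub h' h hne⟩

lemma iwIo_empty {df : A → A → Prop} {L Li : A → Lab} (h : LabLeq L Li) :
    iwIoSet df L Li = ∅ := by
  ext B
  simp only [iwIoSet, Set.mem_setOf_eq, Set.mem_empty_iff_false, iff_false]
  rintro ⟨_, a, _, ha⟩
  rw [io_empty h] at ha
  exact ha

lemma iwDu_sub {df : A → A → Prop} {L' LSO Li : A → Lab} (h' : LabLeq L' LSO)
    (h : LabLeq LSO Li) : iwDuSet df LSO Li ⊆ iwDuSet df L' Li := by
  rintro B ⟨hB, a, haB, ha⟩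
  exact ⟨hB, a, haB, du_sub h' h ha⟩

/-- the skeptical outcome is Pareto optimal in the set of admissible labelings
`⊑` every agent's labeling, for any heterogeneous assignment of the eight preference classes. -/
theorem skeptical_paretoOptimal_heterogeneous {A : Type} [Fintype A] {n : ℕ}
    (df : A → A → Prop) (P : Fin n → (A → Lab)) (hP : ∀ i : Fin n, Complete df (P i))
    (pref : Fin n → (A → Lab) → (A → Lab) → Prop)
    (hpref : ∀ i : Fin n,
      pref i = hamSetPref (P i) ∨ pref i = iwSetPref df (P i) ∨
      pref i = iuoSetPref (P i) ∨ pref i = iwIuoSetPref df (P i) ∨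
      pref i = hamDistPref (P i) ∨ pref i = iwDistPref df (P i) ∨
      pref i = iuoDistPref (P i) ∨ pref i = iwIuoDistPref df (P i))
    (LSO : A → Lab) (hSO : IsSkeptical df P LSO) :
    ParetoOptimalIn pref
      {L : A → Lab | Admissible df L ∧ ∀ i : Fin n, LabLeq L (P i)} LSO := by
  rintro L' ⟨hadm, hleq⟩ ⟨_, j, hjpref, hjnot⟩
  apply hjnot
  -- L' ⊑ LSO since LSO is greatest
  have hL'SO : LabLeq L' LSO := hSO.2.2 L' hadm hleq
  have hSOj : LabLeq LSO (P j) := hSO.2.1 j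
  have hL'j : LabLeq L' (P j) := hleq j
  have hham : hamSet LSO (P j) ⊆ hamSet L' (P j) := ham_sub hL'SO hSOj
  have hdu : duSet LSO (P j) ⊆ duSet L' (P j) := du_sub hL'SO hSOj
  have hioSO : ioSet LSO (P j) = ∅ := io_empty hSOj
  have hiwioSO : iwIoSet df LSO (P j) = ∅ := iwIo_empty hSOj
  rcases hpref j with h | h | h | h | h | h | h | h <;> rw [h]
  · exact hham
  · exact iw_sub hL'SO hSOj
  · exact ⟨by rw [iuoSets]; simp only; rw [hioSO]; exact Set.empty_subset _, hdu⟩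
  · exact ⟨by rw [iwIuoSets]; simp only; rw [hiwioSO]; exact Set.empty_subset _,
      iwDu_sub hL'SO hSOj⟩
  · exact Set.ncard_le_ncard hham (Set.toFinite _)
  · exact Set.ncard_le_ncard (iw_sub hL'SO hSOj) (Set.toFinite _)
  · unfold iuoDistPref iuoDist
    rw [hioSO]
    simp only [Set.ncard_empty, Nat.mul_zero, Nat.zero_add]
    exact le_add_left (Set.ncard_le_ncard hdu (Set.toFinite _))
  · unfold iwIuoDistPref iwIuoDist
    rw [hiwioSO]
    simp only [Set.ncard_empty, Nat.mul_zero, Nat.zero_add]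
    exact le_add_left (Set.ncard_le_ncard (iwDu_sub hL'SO hSOj) (Set.toFinite _))
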